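/- arXiv:1401.3079 — 2 statements merged into one kernel-verified Lean document; each statement's English description precedes it below -/
import Mathlib

section
/- The Barnes-type Daehee polynomials of the first kind satisfy the expansion D_n(x|a_1,…,a_r) = ∑_{m=0}^n S_1(n,m) B_m(x|a_1,…,a_r), where S_1(n,m) are the signed Stirling numbers of the first kind and B_m(x|a_1,…,a_r) are Barnes' multiple Bernoulli polynomials. -/
/-!
Substituting `t ↦ log(1+t)` is a ring endomorphism of `ℚ⟦t⟧` sending `t` to `log(1+t)` and
`e^{at}` to `(1+t)^a`, so it carries the defining identity of the Barnes polynomials to that of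
the Daehee polynomials, up to the image of `∑ B_m(x) t^m/m!`. That image is computed through the
Stirling numbers: `(1+t)^x = ∑ (x)_n t^n/n!` because both sides solve `(1+t) f' = x f`, and
comparing the coefficients of `x^k` on both sides gives `log(1+t)^k/k! = ∑_n S_1(n,k) t^n/n!`.
Cancelling the nonzero product `∏ ((1+t)^{a_j} - 1)` finishes the proof.
-/

open Finset PowerSeries

/-- Exponential generating function: `∑ f n * t^n / n!`. -/
noncomputable def egf (f : ℕ → ℚ) : PowerSeries ℚ :=
  PowerSeries.mk fun n => f n / n.factorial

/-- The formal power series `log(1+t) = ∑_{m≥1} (-1)^{m-1} t^m / m`. -/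
noncomputable def log1p : PowerSeries ℚ :=
  PowerSeries.mk fun n => if n = 0 then 0 else (-1) ^ (n - 1) / n

/-- Formal exponential composition: for `f` with zero constant term this is
`exp(f) = ∑_k f^k / k!` (the sum in each coefficient is finite). -/
noncomputable def expPS (f : PowerSeries ℚ) : PowerSeries ℚ :=
  PowerSeries.mk fun n =>
    ∑ k ∈ Finset.range (n + 1), (PowerSeries.coeff n (f ^ k)) / k.factorial

/-- `(1+t)^a := exp(a · log(1+t))` as a formal power series. -/
noncomputable def onePow (a : ℚ) : PowerSeries ℚ := expPS (PowerSeries.C a * log1p)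

/-- `e^{a t} = ∑ a^n t^n / n!`. -/
noncomputable def expAt (a : ℚ) : PowerSeries ℚ :=
  PowerSeries.mk fun n => a ^ n / n.factorial

/-- Falling factorial `(x)_n = x(x-1)⋯(x-n+1)`. -/
noncomputable def ffall (x : ℚ) (n : ℕ) : ℚ := ∏ i ∈ Finset.range n, (x - i)

namespace PowerSeries

variable {R : Type*} [CommRing R] {b : R⟦X⟧}

lemma coeff_pow_eq_zero_of_lt (hb : constantCoeff b = 0) {n k : ℕ} (h : n < k) :
    coeff n (b ^ k) = 0 :=
  X_pow_dvd_iff.mp (pow_dvd_pow_of_dvd (X_dvd_iff.mpr hb) k) n h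

lemma coeff_subst_eq_sum (hb : constantCoeff b = 0) (f : R⟦X⟧) (n : ℕ) :
    coeff n (f.subst b) = ∑ k ∈ range (n + 1), coeff k f * coeff n (b ^ k) := by
  rw [coeff_subst' (HasSubst.of_constantCoeff_zero' hb)]
  apply finsum_eq_sum_of_support_subset
  intro k hk
  by_contra hkn
  simp only [coe_range, Set.mem_Iio, not_lt] at hkn
  exact hk (by simp [coeff_pow_eq_zero_of_lt hb (show n < k by omega)])

lemma coeff_succ_eq_of_one_add_X_mul_derivative {f : R⟦X⟧} {a : R}
    (h : (1 + X) * d⁄dX R f = C a * f) (n : ℕ) :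
    ((n : R) + 1) * coeff (n + 1) f = (a - n) * coeff n f := by
  have hn := congrArg (coeff n) h
  rw [add_mul, one_mul, map_add, coeff_derivative, coeff_C_mul] at hn
  rcases n with _ | n
  · simpa [coeff_zero_X_mul, mul_comm] using hn
  · rw [coeff_succ_X_mul, coeff_derivative] at hn
    push_cast at hn ⊢
    linear_combination hn

end PowerSeries

lemma eq_of_forall_sum_mul_pow_eq {R : Type*} [CommRing R] [IsDomain R] [Infinite R]
    {c d : ℕ → R} {N : ℕ} (h : ∀ x, ∑ k ∈ range N, c k * x ^ k = ∑ k ∈ range N, d k * x ^ k)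
    {k : ℕ} (hk : k < N) : c k = d k := by
  let P : (ℕ → R) → Polynomial R := fun c =>
    ∑ k ∈ range N, Polynomial.C (c k) * Polynomial.X ^ k
  have hP : P c = P d := Polynomial.funext fun x => by
    simpa [P, Polynomial.eval_finsetSum] using h x
  simpa [P, Polynomial.finsetSum_coeff, Polynomial.coeff_C_mul_X_pow, hk] using
    congrArg (Polynomial.coeff · k) hP

lemma constantCoeff_log1p : constantCoeff log1p = 0 := by
  simp [← coeff_zero_eq_constantCoeff_apply, log1p]

lemma hasSubst_log1p : HasSubst log1p :=
  HasSubst.of_constantCoeff_zero' constantCoeff_log1p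

lemma one_add_X_mul_derivative_log1p : (1 + X) * d⁄dX ℚ log1p = 1 := by
  ext n
  rcases n with _ | n
  · rw [add_mul, one_mul, map_add, coeff_zero_X_mul, coeff_derivative]
    simp [log1p]
  · rw [add_mul, one_mul, map_add, coeff_succ_X_mul, coeff_derivative, coeff_derivative]
    simp only [log1p, coeff_mk, Nat.succ_ne_zero, if_false, Nat.add_sub_cancel, coeff_one]
    push_cast
    field_simp
    ring

lemma derivative_expAt (a : ℚ) : d⁄dX ℚ (expAt a) = C a * expAt a := by
  ext n
  rw [coeff_derivative, coeff_C_mul, expAt, coeff_mk, coeff_mk, Nat.factorial_succ]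
  push_cast
  field_simp
  ring

lemma onePow_eq_subst (a : ℚ) : onePow a = (expAt a).subst log1p := by
  ext n
  rw [coeff_subst_eq_sum constantCoeff_log1p, onePow, expPS, coeff_mk]
  refine sum_congr rfl fun k _ => ?_
  rw [mul_pow, ← map_pow, coeff_C_mul, expAt, coeff_mk]
  ring

lemma one_add_X_mul_derivative_onePow (a : ℚ) :
    (1 + X) * d⁄dX ℚ (onePow a) = C a * onePow a := by
  rw [onePow_eq_subst, derivative_subst hasSubst_log1p, derivative_expAt,
    ← smul_eq_C_mul, subst_smul hasSubst_log1p, smul_mul_assoc, smul_eq_C_mul]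
  linear_combination (C a * (expAt a).subst log1p) * one_add_X_mul_derivative_log1p

lemma coeff_onePow (a : ℚ) (n : ℕ) : coeff n (onePow a) = ffall a n / n.factorial := by
  induction n with
  | zero => simp [onePow, expPS, ffall]
  | succ n ih =>
    have hrec := coeff_succ_eq_of_one_add_X_mul_derivative (one_add_X_mul_derivative_onePow a) n
    rw [ih] at hrec
    rw [ffall, prod_range_succ, ← ffall, Nat.factorial_succ]
    push_cast
    field_simp at hrec ⊢
    linear_combination hrec

lemma coeff_onePow_eq_sum (a : ℚ) (n : ℕ) :
    coeff n (onePow a) = ∑ k ∈ range (n + 1), coeff n (log1p ^ k) / k.factorial * a ^ k := by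
  rw [onePow, expPS, coeff_mk]
  refine sum_congr rfl fun k _ => ?_
  rw [mul_pow, ← map_pow, coeff_C_mul]
  ring

lemma coeff_log1p_pow_div_factorial (S1 : ℕ → ℕ → ℚ)
    (hS1 : ∀ (l : ℕ) (x : ℚ), ffall x l = ∑ j ∈ range (l + 1), S1 l j * x ^ j)
    {n k : ℕ} (hk : k < n + 1) :
    coeff n (log1p ^ k) / k.factorial = S1 n k / n.factorial := by
  refine eq_of_forall_sum_mul_pow_eq (c := fun k => coeff n (log1p ^ k) / k.factorial)
    (d := fun k => S1 n k / n.factorial) (fun x => ?_) hk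
  rw [← coeff_onePow_eq_sum, coeff_onePow, hS1, sum_div]
  exact sum_congr rfl fun j _ => by ring

lemma subst_log1p_egf (S1 : ℕ → ℕ → ℚ)
    (hS1 : ∀ (l : ℕ) (x : ℚ), ffall x l = ∑ j ∈ range (l + 1), S1 l j * x ^ j) (b : ℕ → ℚ) :
    (egf b).subst log1p = egf fun n => ∑ m ∈ range (n + 1), S1 n m * b m := by
  ext n
  rw [coeff_subst_eq_sum constantCoeff_log1p, egf, egf, coeff_mk, sum_div]
  refine sum_congr rfl fun k hk => ?_
  rw [coeff_mk, div_mul_eq_mul_div, mul_div_assoc,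
    coeff_log1p_pow_div_factorial S1 hS1 (mem_range.mp hk)]
  ring

lemma egf_injective : Function.Injective egf := by
  intro f g h
  funext n
  simpa [egf, Nat.factorial_ne_zero] using congrArg (coeff n) h

lemma onePow_sub_one_ne_zero {a : ℚ} (ha : a ≠ 0) : onePow a - 1 ≠ 0 := by
  intro h
  simpa [coeff_onePow, ffall, ha] using congrArg (coeff 1) h

theorem stmt1 (r : ℕ) (a : Fin r → ℚ) (ha : ∀ j, a j ≠ 0) (D : ℕ → ℚ → ℚ)
    (hD : ∀ x : ℚ, (∏ j, (onePow (a j) - 1)) * egf (fun n => D n x) = log1p ^ r * onePow x)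
    (B : ℕ → ℚ → ℚ) (hB : ∀ x : ℚ, (∏ j, (expAt (a j) - 1)) * egf (fun n => B n x) = (PowerSeries.X : PowerSeries ℚ) ^ r * expAt x)
    (S1 : ℕ → ℕ → ℚ) (hS1 : ∀ (l : ℕ) (x : ℚ), ffall x l = ∑ j ∈ Finset.range (l + 1), S1 l j * x ^ j)
    (n : ℕ) (x : ℚ) :
    D n x = ∑ m ∈ Finset.range (n + 1), S1 n m * B m x := by
  have hsubst := congrArg (substAlgHom hasSubst_log1p : ℚ⟦X⟧ →ₐ[ℚ] ℚ⟦X⟧) (hB x)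
  simp only [map_mul, map_prod, map_sub, map_one, map_pow, substAlgHom_X, coe_substAlgHom,
    ← onePow_eq_subst, subst_log1p_egf S1 hS1] at hsubst
  rw [← hD x] at hsubst
  have hprod : ∏ j, (onePow (a j) - 1) ≠ 0 :=
    prod_ne_zero_iff.mpr fun j _ => onePow_sub_one_ne_zero (ha j)
  exact congrFun (egf_injective (mul_left_cancel₀ hprod hsubst).symm) n
end

section
/- Recurrence via Cauchy numbers: for n ≥ 1, D_n(x|a_1,…,a_r) = x·D_{n-1}(x−1|a_1,…,a_r) + (r/n)∑_{l=0}^n C(n,l) c_l D_{n-l}(x−1|a_1,…,a_r) − (1/n)∑_{j=1}^r ∑_{l=0}^n C(n,l) a_j c_l D_{n-l}(x+a_j−1|a_1,…,a_r,a_j), where in the last term the polynomial has r+1 parameters a_1,…,a_r,a_j. -/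
open Finset PowerSeries

/-!
Write `L = log(1+t)`, `P_y = (1+t)^y`, `Q = ∏ⱼ (P_{a_j} - 1)` and `F_y = ∑ D_n(y) tⁿ/n!`, so that
`Q F_y = L^r P_y`. Identifying `P_y` with `exp` substituted into `y L` gives `P_y P_z = P_{y+z}`,
`P_y' = y L' P_y` and `L' = P_{-1}`. Apply `t d/dt` to `Q F_y = L^r P_y` and write
`t = L · ∑ c_n tⁿ/n!`: the right side becomes `(y t + r ∑ c_n tⁿ/n!) Q F_{y-1}`, while on the left
`t Q' F_y` splits over `j` into `Q a_j (∑ c_n tⁿ/n!) E_j(y + a_j - 1)`, because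
`(P_{a_j} - 1) E_j(y) = L F_y`. Cancelling `Q` leaves an identity of generating functions whose
`n`-th coefficient is `n` times the recurrence.
-/

lemma log1p_eq_log : log1p = log ℚ := by
  ext n
  rcases n with _ | n
  · simp [log1p]
  · simp [log1p, pow_succ]

lemma expPS_eq_subst {f : PowerSeries ℚ} (hf : constantCoeff f = 0) :
    expPS f = (exp ℚ).subst f := by
  ext n
  rw [expPS, coeff_mk, coeff_subst' (HasSubst.of_constantCoeff_zero' hf)]
  have hsupp : (Function.support fun d => coeff d (exp ℚ) • coeff n (f ^ d)) ⊆ range (n + 1) := by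
    intro d hd
    by_contra hdn
    have : coeff n (f ^ d) = 0 :=
      X_pow_dvd_iff.mp (pow_dvd_pow_of_dvd (X_dvd_iff.mpr hf) d) n (by simpa using hdn)
    simp [this] at hd
  rw [finsum_eq_sum_of_support_subset _ hsupp]
  refine sum_congr rfl fun d _ => ?_
  simp [coeff_exp, div_eq_inv_mul]

lemma onePow_eq_exp_subst (a : ℚ) : onePow a = (exp ℚ).subst (C a * log ℚ) := by
  rw [onePow, log1p_eq_log, expPS_eq_subst (by simp)]

lemma onePow_eq_rescale_exp_subst (a : ℚ) : onePow a = (rescale a (exp ℚ)).subst (log ℚ) := by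
  rw [onePow_eq_exp_subst, rescale_eq_subst,
    subst_comp_subst_apply (HasSubst.smul_X' a) HasSubst.log, subst_smul HasSubst.log,
    subst_X HasSubst.log, smul_eq_C_mul]

lemma onePow_add (a b : ℚ) : onePow a * onePow b = onePow (a + b) := by
  simp only [onePow_eq_rescale_exp_subst, ← subst_mul HasSubst.log, exp_mul_exp_eq_exp_add]

lemma constantCoeff_onePow (a : ℚ) : constantCoeff (onePow a) = 1 := by
  rw [← coeff_zero_eq_constantCoeff_apply]
  simp [onePow, expPS]

lemma derivative_onePow (a : ℚ) :
    d⁄dX ℚ (onePow a) = C a * d⁄dX ℚ log1p * onePow a := by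
  rw [onePow_eq_exp_subst, derivative_subst (HasSubst.of_constantCoeff_zero' (by simp)),
    derivative_exp, Derivation.leibniz, log1p_eq_log]
  simp only [derivative_C, smul_eq_mul]
  ring

lemma derivative_log1p : d⁄dX ℚ log1p = onePow (-1) := by
  have hinv : (1 + X) * onePow (-1) = 1 := by
    refine derivative.ext ?_ (by simp [constantCoeff_onePow])
    rw [Derivation.leibniz, derivative_onePow, smul_eq_mul, smul_eq_mul, derivative_one,
      map_add, derivative_one, derivative_X, map_neg, map_one]
    linear_combination (-onePow (-1)) * one_add_X_mul_derivative_log1p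
  linear_combination onePow (-1) * one_add_X_mul_derivative_log1p - (d⁄dX ℚ log1p) * hinv

lemma derivative_log1p_mul_onePow (a : ℚ) : d⁄dX ℚ log1p * onePow a = onePow (a - 1) := by
  rw [derivative_log1p, onePow_add, neg_add_eq_sub]

lemma coeff_one_onePow (a : ℚ) : coeff 1 (onePow a) = a := by
  have h := coeff_derivative (onePow a) 0
  rw [derivative_onePow, coeff_zero_eq_constantCoeff_apply] at h
  simpa [constantCoeff_onePow, derivative_log1p] using h.symm

lemma Derivation.map_finset_prod {R A M : Type*} [CommSemiring R] [CommSemiring A] [Algebra R A]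
    [AddCommMonoid M] [Module A M] [Module R M]
    (D : Derivation R A M) {ι : Type*} [DecidableEq ι] (s : Finset ι) (f : ι → A) :
    D (∏ i ∈ s, f i) = ∑ j ∈ s, (∏ i ∈ s.erase j, f i) • D (f j) := by
  induction s using Finset.induction_on with
  | empty => simp
  | insert b s hb ih =>
    rw [prod_insert hb, D.leibniz, ih, sum_insert hb, erase_insert hb, smul_sum, add_comm]
    congr 1
    refine sum_congr rfl fun j hj => ?_
    rw [erase_insert_of_ne (ne_of_mem_of_not_mem hj hb).symm,
      prod_insert fun h => hb (mem_of_mem_erase h), mul_smul]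

lemma egf_add (f g : ℕ → ℚ) : egf f + egf g = egf (f + g) := by
  ext n; simp [egf, add_div]

lemma egf_sub (f g : ℕ → ℚ) : egf f - egf g = egf (f - g) := by
  ext n; simp [egf, sub_div]

lemma C_mul_egf (a : ℚ) (f : ℕ → ℚ) : C a * egf f = egf (a • f) := by
  ext n; simp [egf, mul_div_assoc]

lemma sum_egf {ι : Type*} (s : Finset ι) (f : ι → ℕ → ℚ) :
    ∑ i ∈ s, egf (f i) = egf (∑ i ∈ s, f i) := by
  ext n; simp [egf, sum_div]

lemma X_mul_egf (f : ℕ → ℚ) : X * egf f = egf (fun n => n * f (n - 1)) := by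
  ext n
  rcases n with _ | n
  · simp [egf]
  · rw [coeff_succ_X_mul]
    simp only [egf, coeff_mk, Nat.cast_add, Nat.cast_one, add_tsub_cancel_right,
      Nat.factorial_succ, Nat.cast_mul]
    field_simp

lemma X_mul_derivative_egf (f : ℕ → ℚ) : X * d⁄dX ℚ (egf f) = egf (fun n => n * f n) := by
  ext n
  rcases n with _ | n
  · simp [egf]
  · rw [coeff_succ_X_mul, coeff_derivative]
    simp only [egf, coeff_mk, Nat.factorial_succ, Nat.cast_mul, Nat.cast_add, Nat.cast_one]
    field_simp

lemma egf_mul (f g : ℕ → ℚ) :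
    egf f * egf g = egf (fun n => ∑ l ∈ range (n + 1), (n.choose l : ℚ) * f l * g (n - l)) := by
  ext n
  rw [coeff_mul, Nat.sum_antidiagonal_eq_sum_range_succ_mk]
  simp only [egf, coeff_mk, sum_div]
  refine sum_congr rfl fun l hl => ?_
  rw [Nat.cast_choose ℚ (Nat.lt_succ_iff.mp (mem_range.mp hl))]
  field_simp

section GeneratingFunction

lemma mul_onePow_of_mul_eq {Q g : PowerSeries ℚ} (hQ : Q ≠ 0) {F : ℚ → PowerSeries ℚ}
    (hF : ∀ y, Q * F y = g * onePow y) (y z : ℚ) : F y * onePow z = F (y + z) := by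
  apply mul_left_cancel₀ hQ
  rw [← mul_assoc, hF, hF, mul_assoc, onePow_add]

lemma X_mul_derivative_log1p_pow_mul_onePow {G : PowerSeries ℚ} (hG : log1p * G = X)
    (r : ℕ) (y : ℚ) :
    X * d⁄dX ℚ (log1p ^ r * onePow y) =
      (C y * X + C (r : ℚ) * G) * (log1p ^ r * onePow (y - 1)) := by
  have hP := derivative_log1p_mul_onePow y
  rw [Derivation.leibniz, smul_eq_mul, smul_eq_mul, derivative_onePow]
  rcases r with _ | r
  · simp only [pow_zero, derivative_one, Nat.cast_zero, map_zero]
    linear_combination X * C y * hP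
  · rw [derivative_pow, ← hG]
    push_cast
    simp only [map_add, map_natCast, map_one]
    linear_combination (C y * log1p + (r + 1)) * G * log1p ^ r * log1p * hP

variable {r : ℕ} {a : Fin r → ℚ}

lemma X_mul_derivative_daehee_genFun (ha : ∀ j, a j ≠ 0) {F : ℚ → PowerSeries ℚ}
    (hF : ∀ y, (∏ j, (onePow (a j) - 1)) * F y = log1p ^ r * onePow y)
    {E : Fin r → ℚ → PowerSeries ℚ}
    (hE : ∀ j y, ((onePow (a j) - 1) * ∏ i, (onePow (a i) - 1)) * E j y =
      log1p ^ (r + 1) * onePow y)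
    {G : PowerSeries ℚ} (hG : log1p * G = X) (y : ℚ) :
    X * d⁄dX ℚ (F y) = C y * (X * F (y - 1)) + C (r : ℚ) * (G * F (y - 1))
      - ∑ j, C (a j) * (G * E j (y + a j - 1)) := by
  set Q := ∏ j, (onePow (a j) - 1)
  have hQ : Q ≠ 0 := prod_ne_zero_iff.mpr fun j _ => onePow_sub_one_ne_zero (ha j)
  have hEF : ∀ j y, (onePow (a j) - 1) * E j y = log1p * F y := fun j y => by
    apply mul_left_cancel₀ hQ
    linear_combination hE j y - log1p * hF y
  have hterm : ∀ j, X * ((∏ i ∈ univ.erase j, (onePow (a i) - 1)) *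
      d⁄dX ℚ (onePow (a j) - 1)) * F y = Q * (C (a j) * (G * E j (y + a j - 1))) := fun j => by
    have hQj : (onePow (a j) - 1) * ∏ i ∈ univ.erase j, (onePow (a i) - 1) = Q :=
      mul_prod_erase univ (fun i => onePow (a i) - 1) (mem_univ j)
    have hshift : d⁄dX ℚ log1p * onePow (a j) * F y = F (y + a j - 1) := by
      rw [derivative_log1p_mul_onePow, mul_comm, mul_onePow_of_mul_eq hQ hF, add_sub_assoc]
    rw [map_sub, derivative_one, sub_zero, derivative_onePow, ← hQj]
    linear_combination (C (a j) * (∏ i ∈ univ.erase j, (onePow (a i) - 1))) *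
      (X * hshift + F (y + a j - 1) * hG.symm - G * hEF j (y + a j - 1))
  have hdQ : X * d⁄dX ℚ Q * F y = Q * ∑ j, C (a j) * (G * E j (y + a j - 1)) := by
    rw [Derivation.map_finset_prod, mul_sum, sum_mul, mul_sum]
    exact sum_congr rfl fun j _ => by rw [smul_eq_mul, hterm]
  have hdQF : X * d⁄dX ℚ (Q * F y) = X * d⁄dX ℚ (log1p ^ r * onePow y) := by rw [hF]
  rw [X_mul_derivative_log1p_pow_mul_onePow hG, Derivation.leibniz, smul_eq_mul,
    smul_eq_mul] at hdQF
  apply mul_left_cancel₀ hQ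
  linear_combination hdQF - hdQ - (C y * X + C (r : ℚ) * G) * hF (y - 1)

end GeneratingFunction

theorem stmt12 (r : ℕ) (a : Fin r → ℚ) (ha : ∀ j, a j ≠ 0) (D : ℕ → ℚ → ℚ)
    (hD : ∀ x : ℚ, (∏ j, (onePow (a j) - 1)) * egf (fun n => D n x) = log1p ^ r * onePow x)
    (E : Fin r → ℕ → ℚ → ℚ)
    (hE : ∀ (j : Fin r) (x : ℚ),
      ((onePow (a j) - 1) * ∏ i, (onePow (a i) - 1)) * egf (fun n => E j n x) =
        log1p ^ (r + 1) * onePow x)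
    (c : ℕ → ℚ) (hc : log1p * egf c = PowerSeries.X)
    (n : ℕ) (hn : 1 ≤ n) (x : ℚ) :
    D n x = x * D (n - 1) (x - 1)
      + (r : ℚ) / n * ∑ l ∈ Finset.range (n + 1), (n.choose l : ℚ) * c l * D (n - l) (x - 1)
      - (1 / n) * ∑ j, ∑ l ∈ Finset.range (n + 1),
          (n.choose l : ℚ) * a j * c l * E j (n - l) (x + a j - 1) := by
  have hgen := X_mul_derivative_daehee_genFun ha (F := fun y => egf fun n => D n y) hD
    (E := fun j y => egf fun n => E j n y) hE hc x
  simp only [X_mul_derivative_egf, X_mul_egf, egf_mul, C_mul_egf, sum_egf, egf_sub,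
    egf_add] at hgen
  have hcoeff := congrFun (egf_injective hgen) n
  simp only [Pi.add_apply, Pi.sub_apply, Pi.smul_apply, Finset.sum_apply, smul_eq_mul] at hcoeff
  have hn0 : (n : ℚ) ≠ 0 := Nat.cast_ne_zero.mpr (by omega)
  have hsum : ∑ j, a j * ∑ l ∈ range (n + 1), (n.choose l : ℚ) * c l * E j (n - l) (x + a j - 1)
      = ∑ j, ∑ l ∈ range (n + 1), (n.choose l : ℚ) * a j * c l * E j (n - l) (x + a j - 1) :=
    sum_congr rfl fun j _ => by rw [mul_sum]; exact sum_congr rfl fun l _ => by ring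
  rw [← hsum]
  field_simp
  linear_combination hcoeff
end
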